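/- Let Q be a finite (left) quasifield with q elements, let d ≥ 1 be an integer, let γ ∈ Q, and let M be the adjacency matrix of the product graph DP_Q(d,γ). If v is an eigenvector of M with eigenvalue λ such that v is orthogonal to both χ_X + χ_Y and χ_X − χ_Y (where χ_X, χ_Y are the characteristic vectors of the two parts X and Y), then λ³ = q^d·λ; in particular |λ| ≤ q^{d/2}. -/

import Mathlib

/-- A finite (left) quasifield. -/
class Quasifield (Q : Type*) extends AddCommGroup Q, Mul Q, One Q where
  one_ne_zero : (1 : Q) ≠ 0
  one_mul : ∀ a : Q, 1 * a = a
  mul_one : ∀ a : Q, a * 1 = a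
  zero_mul : ∀ a : Q, 0 * a = 0
  mul_zero : ∀ a : Q, a * 0 = 0
  mul_ne_zero : ∀ a b : Q, a ≠ 0 → b ≠ 0 → a * b ≠ 0
  existsUnique_mul_left : ∀ a b : Q, a ≠ 0 → b ≠ 0 → ∃! x : Q, a * x = b
  existsUnique_mul_right : ∀ a b : Q, a ≠ 0 → b ≠ 0 → ∃! y : Q, y * a = b
  left_distrib : ∀ a b c : Q, a * (b + c) = a * b + a * c
  existsUnique_affine : ∀ a b c : Q, a ≠ b → ∃! x : Q, a * x = b * x + c

/-- The kernel of a quasifield. -/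
def Quasifield.kernel (Q : Type*) [Quasifield Q] : Set Q :=
  {k | (∀ x y : Q, (x + y) * k = x * k + y * k) ∧ ∀ x y : Q, (x * y) * k = x * (y * k)}

open Matrix

/-- The adjacency relation of the product graph `DP_Q(d,γ)`:
`x ∈ X = Q^{d+1}` is adjacent to `y ∈ Y = Q^{d+1}` iff
`x_{d+1} + γ = x₁·y₁ + ⋯ + x_d·y_d + y_{d+1}`. -/
def DPAdj {Q : Type*} [Quasifield Q] (d : ℕ) (γ : Q) (x y : Fin (d + 1) → Q) : Prop :=
  x (Fin.last d) + γ = (∑ i : Fin d, x i.castSucc * y i.castSucc) + y (Fin.last d)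

open scoped Classical in
/-- The `X × Y` block `N` of the adjacency matrix of `DP_Q(d,γ)`. -/
noncomputable def DPBlock (Q : Type*) [Quasifield Q] [Fintype Q] (d : ℕ) (γ : Q) :
    Matrix (Fin (d + 1) → Q) (Fin (d + 1) → Q) ℝ :=
  Matrix.of fun x y => if DPAdj d γ x y then 1 else 0

/-! Write `N` for the `X × Y` block, `J` for the all-ones matrix and `E` for the matrix relating
points of `X` with the same first `d` coordinates. Two distinct `E`-related points have no common
neighbour; for other pairs the common neighbours are the solutions `w` of
`∑ (xᵢ wᵢ - x'ᵢ wᵢ) = x_{d+1} - x'_{d+1}`, and there are `q^(d-1)` of them because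
`s ↦ a s - b s` is a bijection for `a ≠ b`. So `N Nᵀ = q^d I + q^(d-1) (J - E)`. Every `E`-class
contains exactly one neighbour of each `y`, so `E N = J` and `J N = q^d J`, whence
`N Nᵀ N = q^d N + c J` with `c = q^(d-1) (q^d - 1)`, and `M³ = q^d M + c [[0, J], [J, 0]]`.
The last matrix kills `v` by the orthogonality conditions. -/

open Finset

theorem card_filter_sum_apply_eq_of_bijective {ι α A : Type*} [Fintype ι] [DecidableEq ι]
    [Fintype α] [AddCommGroup A] [DecidableEq A] (H : ι → α → A) {i₀ : ι}
    (hH : (H i₀).Bijective) (c : A) :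
    #{w : ι → α | ∑ i, H i (w i) = c} = Fintype.card α ^ (Fintype.card ι - 1) := by
  have split (s : α) (r : {j // j ≠ i₀} → α) : ∑ i, H i ((Equiv.funSplitAt i₀ α).symm (s, r) i)
      = H i₀ s + ∑ j : {j // j ≠ i₀}, H j (r j) := by
    rw [Fintype.sum_eq_add_sum_subtype_ne _ i₀]
    congr 1
    · simp
    · exact sum_congr rfl fun j _ => by simp [j.2]
  have unique_solution (r : {j // j ≠ i₀} → α) :
      #{s | H i₀ s + ∑ j : {j // j ≠ i₀}, H j (r j) = c} = 1 := by
    simp only [← eq_sub_iff_add_eq, ← Fintype.existsUnique_iff_card_one]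
    exact hH.existsUnique _
  rw [card_filter, ← (Equiv.funSplitAt i₀ α).symm.sum_comp, Fintype.sum_prod_type_right]
  simp only [split, ← card_filter, unique_solution]
  simp [Fintype.card_subtype_compl]

theorem Fin.sum_univ_fun_snoc {α M : Type*} [Fintype α] [AddCommMonoid M] {d : ℕ}
    (f : (Fin (d + 1) → α) → M) : ∑ y, f y = ∑ w : Fin d → α, ∑ t, f (Fin.snoc w t) := by
  rw [← (Fin.snocEquiv fun _ => α).sum_comp, Fintype.sum_prod_type_right]
  rfl

theorem Quasifield.mul_sub_mul_bijective {Q : Type*} [Quasifield Q] {a b : Q} (hab : a ≠ b) :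
    Function.Bijective fun x => a * x - b * x := by
  rw [Function.bijective_iff_existsUnique]
  intro c
  simpa only [sub_eq_iff_eq_add'] using existsUnique_affine a b c hab

theorem abs_le_sqrt_of_pow_three_eq_mul {x c : ℝ} (h : x ^ 3 = c * x) : |x| ≤ √c := by
  rcases eq_or_ne x 0 with rfl | hx
  · simp
  · have hsq : x ^ 2 = c := mul_right_cancel₀ hx (by linear_combination h)
    rw [← hsq, Real.sqrt_sq_eq_abs]

def allOnes (m n R : Type*) [One R] : Matrix m n R := of fun _ _ => 1

theorem transpose_allOnes {m n R : Type*} [One R] : (allOnes m n R)ᵀ = allOnes n m R := rfl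

theorem Matrix.fromBlocks_zero_transpose_pow_three {m n R : Type*} [Fintype m] [Fintype n]
    [DecidableEq m] [DecidableEq n] [CommSemiring R] (N : Matrix m n R) :
    fromBlocks 0 N Nᵀ 0 ^ 3 = fromBlocks 0 (N * Nᵀ * N) (N * Nᵀ * N)ᵀ 0 := by
  simp [pow_three, fromBlocks_multiply, transpose_mul, Matrix.mul_assoc]

theorem fromBlocks_allOnes_mulVec_eq_zero {m n R : Type*} [Fintype m] [Fintype n] [Semiring R]
    {v : m ⊕ n → R} (hl : ∑ i, v (Sum.inl i) = 0) (hr : ∑ j, v (Sum.inr j) = 0) :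
    fromBlocks 0 (allOnes m n R) (allOnes n m R) 0 *ᵥ v = 0 := by
  ext (i | j) <;> simp [mulVec, dotProduct, Fintype.sum_sum_type, allOnes, hl, hr]

def sameInitMatrix (Q : Type*) [DecidableEq Q] (d : ℕ) :
    Matrix (Fin (d + 1) → Q) (Fin (d + 1) → Q) ℝ :=
  of fun x x' => if Fin.init x = Fin.init x' then 1 else 0

section ProductGraph

variable {Q : Type*} [Quasifield Q] {d : ℕ} {γ : Q}

theorem dpAdj_snoc_right_iff {x : Fin (d + 1) → Q} {w : Fin d → Q} {t : Q} :
    DPAdj d γ x (Fin.snoc w t) ↔ t = x (Fin.last d) + γ - ∑ i, x i.castSucc * w i := by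
  simp only [DPAdj, Fin.snoc_castSucc, Fin.snoc_last]
  rw [eq_sub_iff_add_eq', eq_comm]

theorem dpAdj_snoc_left_iff {u : Fin d → Q} {s : Q} {y : Fin (d + 1) → Q} :
    DPAdj d γ (Fin.snoc u s) y ↔ s = ∑ i, u i * y i.castSucc + y (Fin.last d) - γ := by
  simp only [DPAdj, Fin.snoc_castSucc, Fin.snoc_last]
  rw [eq_sub_iff_add_eq]

variable [Fintype Q] [DecidableEq Q]

theorem sum_dpBlock_snoc_left (u : Fin d → Q) (y : Fin (d + 1) → Q) :
    ∑ s, DPBlock Q d γ (Fin.snoc u s) y = 1 := by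
  simp [DPBlock, dpAdj_snoc_left_iff]

theorem dpBlock_snoc_right (x : Fin (d + 1) → Q) (w : Fin d → Q) (t : Q) :
    DPBlock Q d γ x (Fin.snoc w t) =
      if t = x (Fin.last d) + γ - ∑ i, x i.castSucc * w i then 1 else 0 := by
  simp [DPBlock, dpAdj_snoc_right_iff]

theorem dpBlock_mul_transpose_apply (x x' : Fin (d + 1) → Q) :
    (DPBlock Q d γ * (DPBlock Q d γ)ᵀ) x x' =
      #{w : Fin d → Q | ∑ i, (x i.castSucc * w i - x' i.castSucc * w i) =
        x (Fin.last d) - x' (Fin.last d)} := by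
  have common_neighbour_iff (w : Fin d → Q) :
      x (Fin.last d) + γ - ∑ i, x i.castSucc * w i =
          x' (Fin.last d) + γ - ∑ i, x' i.castSucc * w i ↔
        ∑ i, (x i.castSucc * w i - x' i.castSucc * w i) = x (Fin.last d) - x' (Fin.last d) := by
    have hdiff : x (Fin.last d) + γ - ∑ i, x i.castSucc * w i -
        (x' (Fin.last d) + γ - ∑ i, x' i.castSucc * w i) =
          x (Fin.last d) - x' (Fin.last d) -
            (∑ i, x i.castSucc * w i - ∑ i, x' i.castSucc * w i) := by abel
    rw [← sub_eq_zero, hdiff, sub_eq_zero, eq_comm, sum_sub_distrib]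
  rw [mul_apply, Fin.sum_univ_fun_snoc]
  simp only [transpose_apply, dpBlock_snoc_right, boole_mul, sum_ite_eq', mem_univ, if_true,
    common_neighbour_iff]
  rw [sum_boole]

-- For `d = 0` the truncated `d - 1` is harmless: then `sameInitMatrix Q 0 = allOnes _ _ ℝ`.
theorem dpBlock_mul_transpose :
    DPBlock Q d γ * (DPBlock Q d γ)ᵀ = (Fintype.card Q : ℝ) ^ d • (1 : Matrix _ _ ℝ) +
      (Fintype.card Q : ℝ) ^ (d - 1) • (allOnes _ _ ℝ - sameInitMatrix Q d) := by
  ext x x'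
  rw [dpBlock_mul_transpose_apply]
  by_cases hinit : Fin.init x = Fin.init x'
  · have hzero (w : Fin d → Q) (i : Fin d) : x i.castSucc * w i - x' i.castSucc * w i = 0 := by
      rw [show x i.castSucc = x' i.castSucc from congrFun hinit i, sub_self]
    by_cases hlast : x (Fin.last d) = x' (Fin.last d)
    · obtain rfl : x = x' := by
        rw [← Fin.snoc_init_self x, ← Fin.snoc_init_self x', hinit, hlast]
      simp [allOnes, sameInitMatrix]
    · have hne : x ≠ x' := fun h => hlast (h ▸ rfl)
      simp [hzero, allOnes, sameInitMatrix, hinit, hne, eq_comm (a := (0 : Q)), sub_eq_zero, hlast]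
  · obtain ⟨i₀, hi₀⟩ : ∃ i : Fin d, x i.castSucc ≠ x' i.castSucc := by
      contrapose! hinit
      exact funext hinit
    have hne : x ≠ x' := fun h => hinit (h ▸ rfl)
    rw [card_filter_sum_apply_eq_of_bijective
      (fun (i : Fin d) s => x i.castSucc * s - x' i.castSucc * s)
      (Quasifield.mul_sub_mul_bijective hi₀)]
    simp [allOnes, sameInitMatrix, hinit, hne]

theorem sameInitMatrix_mul_dpBlock : sameInitMatrix Q d * DPBlock Q d γ = allOnes _ _ ℝ := by
  ext x y
  rw [mul_apply, Fin.sum_univ_fun_snoc, sum_comm]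
  simp [sameInitMatrix, allOnes, sum_dpBlock_snoc_left]

theorem allOnes_mul_dpBlock :
    allOnes _ _ ℝ * DPBlock Q d γ = (Fintype.card Q : ℝ) ^ d • allOnes _ _ ℝ := by
  ext x y
  simp [allOnes, mul_apply, Fin.sum_univ_fun_snoc, sum_dpBlock_snoc_left]

theorem dpBlock_mul_transpose_mul :
    DPBlock Q d γ * (DPBlock Q d γ)ᵀ * DPBlock Q d γ = (Fintype.card Q : ℝ) ^ d • DPBlock Q d γ +
      ((Fintype.card Q : ℝ) ^ (d - 1) * ((Fintype.card Q : ℝ) ^ d - 1)) • allOnes _ _ ℝ := by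
  rw [dpBlock_mul_transpose, add_mul, smul_mul, one_mul, smul_mul, sub_mul,
    sameInitMatrix_mul_dpBlock, allOnes_mul_dpBlock]
  module

theorem fromBlocks_dpBlock_pow_three :
    fromBlocks 0 (DPBlock Q d γ) (DPBlock Q d γ)ᵀ 0 ^ 3 =
      (Fintype.card Q : ℝ) ^ d • fromBlocks 0 (DPBlock Q d γ) (DPBlock Q d γ)ᵀ 0 +
        ((Fintype.card Q : ℝ) ^ (d - 1) * ((Fintype.card Q : ℝ) ^ d - 1)) •
          fromBlocks 0 (allOnes _ _ ℝ) (allOnes _ _ ℝ) 0 := by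
  rw [fromBlocks_zero_transpose_pow_three, dpBlock_mul_transpose_mul, transpose_add,
    transpose_smul, transpose_smul, transpose_allOnes, fromBlocks_smul, fromBlocks_smul,
    fromBlocks_add]
  simp only [smul_zero, add_zero]

end ProductGraph

theorem stmt_18_general {Q : Type*} [Quasifield Q] [Fintype Q] [DecidableEq Q]
    (d : ℕ) (γ : Q)
    (v : ((Fin (d + 1) → Q) ⊕ (Fin (d + 1) → Q)) → ℝ) (hv : v ≠ 0) (lam : ℝ)
    (heig : (Matrix.fromBlocks 0 (DPBlock Q d γ) (DPBlock Q d γ)ᵀ 0).mulVec v = lam • v)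
    (horth₁ : dotProduct
      ((Sum.elim (fun _ => (1 : ℝ)) (fun _ => 0)) + (Sum.elim (fun _ => (0 : ℝ)) (fun _ => 1)))
      v = 0)
    (horth₂ : dotProduct
      ((Sum.elim (fun _ => (1 : ℝ)) (fun _ => 0)) - (Sum.elim (fun _ => (0 : ℝ)) (fun _ => 1)))
      v = 0) :
    lam ^ 3 = (Fintype.card Q : ℝ) ^ d * lam ∧
      |lam| ≤ (Fintype.card Q : ℝ) ^ ((d : ℝ) / 2) := by
  obtain ⟨hsumX, hsumY⟩ : ∑ x, v (Sum.inl x) = 0 ∧ ∑ y, v (Sum.inr y) = 0 := by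
    simp [dotProduct, Fintype.sum_sum_type] at horth₁ horth₂
    constructor <;> linarith
  have hcube : lam ^ 3 • v = ((Fintype.card Q : ℝ) ^ d * lam) • v := by
    calc lam ^ 3 • v = fromBlocks 0 (DPBlock Q d γ) (DPBlock Q d γ)ᵀ 0 ^ 3 *ᵥ v := by
          simp [pow_three, ← mulVec_mulVec, heig, mulVec_smul, smul_smul, mul_assoc]
      _ = ((Fintype.card Q : ℝ) ^ d * lam) • v := by
          rw [fromBlocks_dpBlock_pow_three, add_mulVec, smul_mulVec, smul_mulVec, heig,
            fromBlocks_allOnes_mulVec_eq_zero hsumX hsumY, smul_zero, add_zero,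
            smul_smul]
  have hlam : lam ^ 3 = (Fintype.card Q : ℝ) ^ d * lam := smul_left_injective ℝ hv hcube
  refine ⟨hlam, ?_⟩
  calc |lam| ≤ √((Fintype.card Q : ℝ) ^ d) := abs_le_sqrt_of_pow_three_eq_mul hlam
    _ = (Fintype.card Q : ℝ) ^ ((d : ℝ) / 2) := by
      rw [Real.sqrt_eq_rpow, ← Real.rpow_natCast, ← Real.rpow_mul (Nat.cast_nonneg _)]
      ring_nf

/-- Lemma 4.2: if `v` is a (nonzero) eigenvector of the adjacency matrix
`M = [[0,N],[Nᵀ,0]]` of `DP_Q(d,γ)` with eigenvalue `lam`, and `v` is orthogonal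
to both `χ_X + χ_Y` and `χ_X - χ_Y`, then `lam³ = q^d·lam`; in particular
`|lam| ≤ q^{d/2}`. -/
theorem stmt_18 {Q : Type*} [Quasifield Q] [Fintype Q] [DecidableEq Q]
    (d : ℕ) (hd : 1 ≤ d) (γ : Q)
    (v : ((Fin (d + 1) → Q) ⊕ (Fin (d + 1) → Q)) → ℝ) (hv : v ≠ 0) (lam : ℝ)
    (heig : (Matrix.fromBlocks 0 (DPBlock Q d γ) (DPBlock Q d γ)ᵀ 0).mulVec v = lam • v)
    (horth₁ : dotProduct
      ((Sum.elim (fun _ => (1 : ℝ)) (fun _ => 0)) + (Sum.elim (fun _ => (0 : ℝ)) (fun _ => 1)))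
      v = 0)
    (horth₂ : dotProduct
      ((Sum.elim (fun _ => (1 : ℝ)) (fun _ => 0)) - (Sum.elim (fun _ => (0 : ℝ)) (fun _ => 1)))
      v = 0) :
    lam ^ 3 = (Fintype.card Q : ℝ) ^ d * lam ∧
      |lam| ≤ (Fintype.card Q : ℝ) ^ ((d : ℝ) / 2) :=
  stmt_18_general d γ v hv lam heig horth₁ horth₂
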